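/- arXiv:2206.07630 — 4 statements merged into one kernel-verified Lean document; each statement's English description precedes it below -/
import Mathlib

section
/- For a discrete entropic optimal transport problem with kernel matrix K = exp(-C/ε), the Sinkhorn iterates satisfy ‖f^(ℓ) − f*‖_var ≤ λ(K)^(2ℓ) ‖f^(0) − f*‖_var, where λ(K) = (√η(K) − 1)/(√η(K) + 1) < 1, η(K) = max_{i,j,k,l} (K_{ik}K_{jl})/(K_{jk}K_{il}), and ‖·‖_var is the variation seminorm ‖u‖_var = max_i u_i − min_i u_i. -/
open Finset Real

/-- Variation seminorm: max entry minus min entry. -/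
noncomputable def varNorm {n : ℕ} [Nonempty (Fin n)] (u : Fin n → ℝ) : ℝ :=
  Finset.univ.sup' Finset.univ_nonempty u - Finset.univ.inf' Finset.univ_nonempty u

/-- Entropic dual objective E(f,g) = ⟨f,a⟩ + ⟨g,b⟩ − ε ⟨e^{f/ε}, K e^{g/ε}⟩. -/
noncomputable def dualObj {n m : ℕ} (ε : ℝ) (a : Fin n → ℝ) (b : Fin m → ℝ)
    (K : Matrix (Fin n) (Fin m) ℝ) (f : Fin n → ℝ) (g : Fin m → ℝ) : ℝ :=
  (∑ i, f i * a i) + (∑ j, g j * b j) -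
    ε * ∑ i, ∑ j, Real.exp (f i / ε) * K i j * Real.exp (g j / ε)

/-- One full Sinkhorn iteration on `f` (update `g` from `f`, then `f` from `g`). -/
noncomputable def sinkhornStep {n m : ℕ} (ε : ℝ) (a : Fin n → ℝ) (b : Fin m → ℝ)
    (C : Matrix (Fin n) (Fin m) ℝ) (f : Fin n → ℝ) : Fin n → ℝ :=
  let g : Fin m → ℝ :=
    fun j => ε * Real.log (b j) - ε * Real.log (∑ i, Real.exp ((f i - C i j) / ε))
  fun i => ε * Real.log (a i) - ε * Real.log (∑ j, Real.exp ((g j - C i j) / ε))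

/-!
The Sinkhorn step is the composition of two maps of the form
`x ↦ (ε log ∑ⱼ Aᵢⱼ exp (xⱼ / ε))ᵢ`, and each of them contracts the variation seminorm by
`λ = (√η - 1) / (√η + 1)` (Birkhoff–Hopf). Along the segment from `y` to `x`, the derivative of the
difference of two rows of such a map is `∑ⱼ (Pⱼ - Qⱼ) (xⱼ - yⱼ)` for two Gibbs distributions
`P`, `Q` whose cross ratios `Pⱼ Qₖ / (Pₖ Qⱼ)` are bounded by `η`. This is at most
`(P(S) - Q(S)) · ‖x - y‖_var` with `S = {Q < P}`, and the cross-ratio bound gives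
`P(S) (1 - Q(S)) ≤ η Q(S) (1 - P(S))`, hence `P(S) - Q(S) ≤ λ`. Finally `f*` is a fixed point of the
step: the first-order conditions for the dual objective are the Sinkhorn marginal equations.
-/

open scoped Matrix

lemma sub_le_of_mul_one_sub_le {x y η : ℝ} (hη : 1 ≤ η) (hx : x ≤ 1) (hy : 0 ≤ y)
    (h : x * (1 - y) ≤ η * (y * (1 - x))) : x - y ≤ (√η - 1) / (√η + 1) := by
  -- `(x + 1 - y)² - (y + 1 - x)² = 4 (x (1 - y) - y (1 - x))` and `4 y (1 - x) ≤ (y + 1 - x)²`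
  have hsq : (x + 1 - y) ^ 2 ≤ (√η * (y + 1 - x)) ^ 2 := by
    rw [mul_pow, Real.sq_sqrt (by linarith)]
    nlinarith [sq_nonneg (x + y - 1), mul_nonneg (sub_nonneg.2 hη) (sq_nonneg (x + y - 1))]
  have hlin : x + 1 - y ≤ √η * (y + 1 - x) :=
    abs_le_of_sq_le_sq' hsq (mul_nonneg (sqrt_nonneg η) (by linarith)) |>.2
  rw [le_div_iff₀ (by positivity)]
  linarith

section CrossRatio

variable {κ : Type*} [Fintype κ]

lemma sum_mul_sum_compl_le [DecidableEq κ] {P Q : κ → ℝ} {η : ℝ}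
    (hcross : ∀ j k, P j * Q k ≤ η * (P k * Q j)) (A : Finset κ) :
    (∑ j ∈ A, P j) * ∑ k ∈ Aᶜ, Q k ≤ η * ((∑ j ∈ A, Q j) * ∑ k ∈ Aᶜ, P k) := by
  rw [sum_mul_sum, sum_mul_sum, mul_sum]
  refine sum_le_sum fun j _ => ?_
  rw [mul_sum]
  refine sum_le_sum fun k _ => ?_
  calc P j * Q k ≤ η * (P k * Q j) := hcross j k
    _ = η * (Q j * P k) := by ring

lemma sum_sub_mul_le_of_cross_le {P Q s : κ → ℝ} {η m M : ℝ} (hη : 1 ≤ η)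
    (hP : ∀ j, 0 ≤ P j) (hQ : ∀ j, 0 ≤ Q j) (hP1 : ∑ j, P j = 1) (hQ1 : ∑ j, Q j = 1)
    (hcross : ∀ j k, P j * Q k ≤ η * (P k * Q j)) (hs : ∀ j, m ≤ s j ∧ s j ≤ M) :
    ∑ j, (P j - Q j) * s j ≤ (√η - 1) / (√η + 1) * (M - m) := by
  classical
  set A := univ.filter fun j => Q j < P j
  have hcompl (R : κ → ℝ) (hR : ∑ j, R j = 1) : ∑ k ∈ Aᶜ, R k = 1 - ∑ j ∈ A, R j := by
    rw [← hR, ← sum_compl_add_sum A]; ring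
  have hmass : ∑ j ∈ A, P j - ∑ j ∈ A, Q j ≤ (√η - 1) / (√η + 1) := by
    refine sub_le_of_mul_one_sub_le hη ?_ (sum_nonneg fun j _ => hQ j) ?_
    · exact hP1 ▸ sum_le_univ_sum_of_nonneg hP
    · simpa only [hcompl P hP1, hcompl Q hQ1] using sum_mul_sum_compl_le hcross A
  have hcentre : ∑ j, (P j - Q j) * s j = ∑ j, (P j - Q j) * (s j - m) := by
    simp only [mul_sub, sum_sub_distrib, ← sum_mul, hP1, hQ1, sub_self, zero_mul, sub_zero]
  calc ∑ j, (P j - Q j) * s j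
      ≤ ∑ j, if Q j < P j then (P j - Q j) * (M - m) else 0 := by
        rw [hcentre]
        gcongr with j
        split_ifs with hj
        · exact mul_le_mul_of_nonneg_left (by linarith [hs j]) (by linarith)
        · exact mul_nonpos_of_nonpos_of_nonneg (by linarith) (by linarith [hs j])
    _ = (∑ j ∈ A, P j - ∑ j ∈ A, Q j) * (M - m) := by
        rw [← sum_filter, ← sum_mul, sum_sub_distrib]
    _ ≤ (√η - 1) / (√η + 1) * (M - m) := by
        obtain ⟨j⟩ : Nonempty κ := by
          by_contra h; simp [not_nonempty_iff.1 h] at hP1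
        exact mul_le_mul_of_nonneg_right hmass (by linarith [hs j])

end CrossRatio

section LogSumExp

variable {κ : Type*} [Fintype κ] (ε : ℝ)

noncomputable def logSumExp (p x : κ → ℝ) : ℝ := ε * log (∑ j, p j * exp (x j / ε))

noncomputable def gibbs (p x : κ → ℝ) (j : κ) : ℝ :=
  p j * exp (x j / ε) / ∑ k, p k * exp (x k / ε)

variable {ε}

lemma gibbs_nonneg {p : κ → ℝ} (hp : ∀ j, 0 < p j) (x : κ → ℝ) (j : κ) :
    0 ≤ gibbs ε p x j := by
  unfold gibbs
  exact div_nonneg (mul_nonneg (hp j).le (exp_pos _).le)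
    (sum_nonneg fun k _ => mul_nonneg (hp k).le (exp_pos _).le)

lemma sum_gibbs [Nonempty κ] {p : κ → ℝ} (hp : ∀ j, 0 < p j) (x : κ → ℝ) :
    ∑ j, gibbs ε p x j = 1 := by
  simp only [gibbs]
  rw [← sum_div, div_self]
  exact (sum_pos (fun j _ => mul_pos (hp j) (exp_pos _)) univ_nonempty).ne'

lemma gibbs_mul_gibbs_le {p q : κ → ℝ} (hp : ∀ j, 0 < p j) (hq : ∀ j, 0 < q j) {η : ℝ}
    (hcross : ∀ j k, p j * q k ≤ η * (p k * q j)) (x : κ → ℝ) (j k : κ) :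
    gibbs ε p x j * gibbs ε q x k ≤ η * (gibbs ε p x k * gibbs ε q x j) := by
  set W := exp (x j / ε) * exp (x k / ε) /
    ((∑ i, p i * exp (x i / ε)) * ∑ i, q i * exp (x i / ε))
  have hW : 0 ≤ W := div_nonneg (by positivity) <| mul_nonneg
    (sum_nonneg fun i _ => mul_nonneg (hp i).le (exp_pos _).le)
    (sum_nonneg fun i _ => mul_nonneg (hq i).le (exp_pos _).le)
  calc gibbs ε p x j * gibbs ε q x k = p j * q k * W := by simp only [gibbs, W]; ring
    _ ≤ η * (p k * q j) * W := mul_le_mul_of_nonneg_right (hcross j k) hW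
    _ = η * (gibbs ε p x k * gibbs ε q x j) := by simp only [gibbs, W]; ring

lemma hasDerivAt_logSumExp_add_smul (hε : ε ≠ 0) [Nonempty κ] {p : κ → ℝ} (hp : ∀ j, 0 < p j)
    (y s : κ → ℝ) (θ : ℝ) :
    HasDerivAt (fun θ : ℝ => logSumExp ε p (y + θ • s))
      (∑ j, gibbs ε p (y + θ • s) j * s j) θ := by
  have hsum : HasDerivAt (fun θ : ℝ => ∑ j, p j * exp ((y + θ • s) j / ε))
      (∑ j, p j * (exp ((y + θ • s) j / ε) * (s j / ε))) θ := by
    refine HasDerivAt.fun_sum fun j _ => HasDerivAt.const_mul _ (HasDerivAt.exp ?_)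
    simpa using ((hasDerivAt_mul_const (s j)).const_add (y j)).div_const ε
  have hpos : 0 < ∑ j, p j * exp ((y + θ • s) j / ε) :=
    sum_pos (fun j _ => mul_pos (hp j) (exp_pos _)) univ_nonempty
  refine ((hsum.log hpos.ne').const_mul ε).congr_deriv ?_
  simp only [gibbs, mul_sum, sum_div]
  refine sum_congr rfl fun j _ => ?_
  field_simp

lemma logSumExp_sub_logSumExp_le [Nonempty κ] (hε : ε ≠ 0) {p q : κ → ℝ} (hp : ∀ j, 0 < p j)
    (hq : ∀ j, 0 < q j) {η : ℝ} (hη : 1 ≤ η) (hcross : ∀ j k, p j * q k ≤ η * (p k * q j))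
    {x y : κ → ℝ} {m M : ℝ} (hxy : ∀ j, m ≤ x j - y j ∧ x j - y j ≤ M) :
    (logSumExp ε p x - logSumExp ε q x) - (logSumExp ε p y - logSumExp ε q y) ≤
      (√η - 1) / (√η + 1) * (M - m) := by
  set h : ℝ → ℝ := fun θ =>
    logSumExp ε p (y + θ • (x - y)) - logSumExp ε q (y + θ • (x - y))
  have hderiv (θ : ℝ) : HasDerivAt h (∑ j, (gibbs ε p (y + θ • (x - y)) j
      - gibbs ε q (y + θ • (x - y)) j) * (x j - y j)) θ := by
    simp only [sub_mul, sum_sub_distrib]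
    exact (hasDerivAt_logSumExp_add_smul hε hp y (x - y) θ).sub
      (hasDerivAt_logSumExp_add_smul hε hq y (x - y) θ)
  obtain ⟨c, -, hc⟩ := exists_hasDerivAt_eq_slope h _ zero_lt_one
    (continuous_iff_continuousAt.2 fun θ => (hderiv θ).continuousAt).continuousOn
    fun θ _ => hderiv θ
  have hends : h 1 - h 0 =
      (logSumExp ε p x - logSumExp ε q x) - (logSumExp ε p y - logSumExp ε q y) := by
    simp only [h, one_smul, zero_smul, add_zero, add_sub_cancel]
  rw [sub_zero, div_one] at hc
  rw [← hends, ← hc]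
  exact sum_sub_mul_le_of_cross_le hη (gibbs_nonneg hp _) (gibbs_nonneg hq _)
    (sum_gibbs hp _) (sum_gibbs hq _) (gibbs_mul_gibbs_le hp hq hcross _) hxy

end LogSumExp

lemma varNorm_le_of_forall_sub_le {n : ℕ} [Nonempty (Fin n)] {u : Fin n → ℝ} {B : ℝ}
    (h : ∀ i i', u i - u i' ≤ B) : varNorm u ≤ B := by
  obtain ⟨i, -, hi⟩ := exists_mem_eq_sup' univ_nonempty u
  obtain ⟨i', -, hi'⟩ := exists_mem_eq_inf' univ_nonempty u
  rw [varNorm, hi, hi']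
  exact h i i'

lemma varNorm_logSumExp_sub_logSumExp_le {r c : ℕ} [Nonempty (Fin r)] [Nonempty (Fin c)] {ε η : ℝ}
    (hε : ε ≠ 0) (hη : 1 ≤ η) {A : Fin r → Fin c → ℝ} (hA : ∀ i j, 0 < A i j)
    (hcross : ∀ i i' j j', A i j * A i' j' ≤ η * (A i j' * A i' j)) (x y : Fin c → ℝ) :
    varNorm (fun i => logSumExp ε (A i) x - logSumExp ε (A i) y) ≤
      (√η - 1) / (√η + 1) * varNorm (x - y) := by
  refine varNorm_le_of_forall_sub_le fun i i' => ?_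
  have hbounds (j : Fin c) : univ.inf' univ_nonempty (x - y) ≤ x j - y j ∧
      x j - y j ≤ univ.sup' univ_nonempty (x - y) :=
    ⟨inf'_le (x - y) (mem_univ j), le_sup' (x - y) (mem_univ j)⟩
  have := logSumExp_sub_logSumExp_le hε (hA i) (hA i') hη (fun j k => hcross i i' j k) hbounds
  simp only [varNorm]
  linarith

lemma sinkhornStep_eq_logSumExp {n m : ℕ} {ε : ℝ} {a : Fin n → ℝ} {b : Fin m → ℝ}
    {C K : Matrix (Fin n) (Fin m) ℝ} (hK : ∀ i j, K i j = exp (-C i j / ε)) (f : Fin n → ℝ) :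
    sinkhornStep ε a b C f =
      fun i => ε * log (a i) -
        logSumExp ε (K i) fun j => ε * log (b j) - logSumExp ε (Kᵀ j) f := by
  simp only [sinkhornStep, logSumExp, hK, Matrix.transpose_apply, ← exp_add, neg_div,
    neg_add_eq_sub, sub_div]

lemma varNorm_sinkhornStep_sub_le {n m : ℕ} [Nonempty (Fin n)] [Nonempty (Fin m)] {ε η : ℝ}
    (hε : ε ≠ 0) (hη : 1 ≤ η) {a : Fin n → ℝ} {b : Fin m → ℝ} {C K : Matrix (Fin n) (Fin m) ℝ}
    (hK : ∀ i j, K i j = exp (-C i j / ε))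
    (hcross : ∀ i i' j j', K i j * K i' j' ≤ η * (K i j' * K i' j)) (f f' : Fin n → ℝ) :
    varNorm (sinkhornStep ε a b C f - sinkhornStep ε a b C f') ≤
      ((√η - 1) / (√η + 1)) ^ 2 * varNorm (f - f') := by
  have hKpos (i j) : 0 < K i j := hK i j ▸ exp_pos _
  set G : (Fin n → ℝ) → Fin m → ℝ := fun f j => ε * log (b j) - logSumExp ε (Kᵀ j) f
  have hrows : varNorm (sinkhornStep ε a b C f - sinkhornStep ε a b C f') ≤
      (√η - 1) / (√η + 1) * varNorm (G f' - G f) := by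
    convert varNorm_logSumExp_sub_logSumExp_le hε hη hKpos hcross (G f') (G f) using 2
    ext i
    simp only [sinkhornStep_eq_logSumExp hK, G, Pi.sub_apply]
    ring
  have hcols : varNorm (G f' - G f) ≤ (√η - 1) / (√η + 1) * varNorm (f - f') := by
    convert varNorm_logSumExp_sub_logSumExp_le hε hη (A := Kᵀ) (fun j i => hKpos i j)
      (fun j j' i i' => by simpa only [Matrix.transpose_apply, mul_comm] using hcross i i' j j')
      f f' using 2
    ext j
    simp only [G, Pi.sub_apply]
    ring
  have hlam : 0 ≤ (√η - 1) / (√η + 1) :=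
    div_nonneg (by linarith [one_le_sqrt.2 hη]) (by positivity)
  calc _ ≤ (√η - 1) / (√η + 1) * varNorm (G f' - G f) := hrows
    _ ≤ (√η - 1) / (√η + 1) * ((√η - 1) / (√η + 1) * varNorm (f - f')) := by gcongr
    _ = _ := by ring

lemma dualObj_transpose {n m : ℕ} (ε : ℝ) (a : Fin n → ℝ) (b : Fin m → ℝ)
    (K : Matrix (Fin n) (Fin m) ℝ) (f : Fin n → ℝ) (g : Fin m → ℝ) :
    dualObj ε a b K f g = dualObj ε b a Kᵀ g f := by
  have hcomm (i : Fin n) (j : Fin m) : exp (g j / ε) * K i j * exp (f i / ε) =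
      exp (f i / ε) * K i j * exp (g j / ε) := by ring
  simp only [dualObj, Matrix.transpose_apply, hcomm]
  rw [sum_comm (γ := Fin m)]
  ring

lemma hasDerivAt_dualObj_update {n m : ℕ} {ε : ℝ} (hε : ε ≠ 0) (a : Fin n → ℝ)
    (b : Fin m → ℝ) (K : Matrix (Fin n) (Fin m) ℝ) (f : Fin n → ℝ) (g : Fin m → ℝ) (i : Fin n) :
    HasDerivAt (fun τ => dualObj ε a b K (Function.update f i τ) g)
      (a i - exp (f i / ε) * ∑ j, K i j * exp (g j / ε)) (f i) := by
  have hcoord (i' : Fin n) := hasDerivAt_pi.1 (hasDerivAt_update f i (f i)) i'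
  have := (((HasDerivAt.fun_sum (u := univ) fun i' _ => (hcoord i').mul_const (a i')).add_const
    (∑ j, g j * b j)).sub ((HasDerivAt.fun_sum (u := univ) fun i' _ =>
      HasDerivAt.fun_sum (u := univ) fun j _ =>
        (((hcoord i').div_const ε).exp.mul_const (K i' j)).mul_const (exp (g j / ε))).const_mul ε))
  refine this.congr_deriv ?_
  simp only [Pi.single_apply, ite_mul, one_mul, zero_mul, sum_ite_eq', mem_univ, ↓reduceIte,
    Function.update_eq_self, ite_div, one_div, zero_div, mul_ite, mul_zero, sum_ite_irrel,
    sum_const_zero, mul_sum, sub_right_inj]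
  refine sum_congr rfl fun j _ => ?_
  field_simp

lemma eq_log_sub_logSumExp_of_forall_dualObj_le {n m : ℕ} [Nonempty (Fin m)] {ε : ℝ} (hε : ε ≠ 0)
    {a : Fin n → ℝ} {b : Fin m → ℝ} {K : Matrix (Fin n) (Fin m) ℝ} (hK : ∀ i j, 0 < K i j)
    {f : Fin n → ℝ} {g : Fin m → ℝ}
    (hopt : ∀ f', dualObj ε a b K f' g ≤ dualObj ε a b K f g) (i : Fin n) :
    f i = ε * log (a i) - logSumExp ε (K i) g := by
  have hmax : IsLocalMax (fun τ => dualObj ε a b K (Function.update f i τ) g) (f i) :=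
    Filter.Eventually.of_forall fun τ => by simpa only [Function.update_eq_self] using hopt _
  have hmarginal : exp (f i / ε) * ∑ j, K i j * exp (g j / ε) = a i := by
    linarith [hmax.hasDerivAt_eq_zero (hasDerivAt_dualObj_update hε a b K f g i)]
  have hS : 0 < ∑ j, K i j * exp (g j / ε) :=
    sum_pos (fun j _ => mul_pos (hK i j) (exp_pos _)) univ_nonempty
  rw [logSumExp, ← hmarginal, log_mul (exp_pos _).ne' hS.ne', log_exp]
  field_simp
  ring

lemma sinkhornStep_eq_self_of_forall_dualObj_le {n m : ℕ} [Nonempty (Fin n)] [Nonempty (Fin m)]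
    {ε : ℝ} (hε : ε ≠ 0) {a : Fin n → ℝ} {b : Fin m → ℝ} {C K : Matrix (Fin n) (Fin m) ℝ}
    (hK : ∀ i j, K i j = exp (-C i j / ε))
    {f : Fin n → ℝ} {g : Fin m → ℝ}
    (hopt : ∀ f' g', dualObj ε a b K f' g' ≤ dualObj ε a b K f g) :
    sinkhornStep ε a b C f = f := by
  have hKpos (i j) : 0 < K i j := hK i j ▸ exp_pos _
  have hg : (fun j => ε * log (b j) - logSumExp ε (Kᵀ j) f) = g := by
    funext j
    refine (eq_log_sub_logSumExp_of_forall_dualObj_le (a := b) (b := a) hε (fun j i => hKpos i j)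
      (fun g' => ?_) j).symm
    have h := hopt f g'
    rwa [dualObj_transpose ε a b K f g', dualObj_transpose ε a b K f g] at h
  funext i
  rw [sinkhornStep_eq_logSumExp hK, hg]
  exact (eq_log_sub_logSumExp_of_forall_dualObj_le hε hKpos (fun f' => hopt f' g) i).symm

theorem stmt0_general {n m : ℕ} [Nonempty (Fin n)] [Nonempty (Fin m)]
    (ε : ℝ) (hε : 0 < ε)
    (C : Matrix (Fin n) (Fin m) ℝ)
    (a : Fin n → ℝ) (b : Fin m → ℝ)
    (K : Matrix (Fin n) (Fin m) ℝ) (hK : ∀ i j, K i j = Real.exp (-C i j / ε))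
    (η : ℝ)
    (hη : IsGreatest {r : ℝ | ∃ i j : Fin n, ∃ k l : Fin m,
      r = K i k * K j l / (K j k * K i l)} η)
    (lam : ℝ) (hlam : lam = (Real.sqrt η - 1) / (Real.sqrt η + 1))
    (fstar : Fin n → ℝ) (gstar : Fin m → ℝ)
    (hopt : ∀ (f' : Fin n → ℝ) (g' : Fin m → ℝ),
      dualObj ε a b K f' g' ≤ dualObj ε a b K fstar gstar)
    (f : ℕ → Fin n → ℝ)
    (hiter : ∀ ℓ : ℕ, f (ℓ + 1) = sinkhornStep ε a b C (f ℓ)) :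
    lam < 1 ∧
      ∀ ℓ : ℕ, varNorm (f ℓ - fstar) ≤ lam ^ (2 * ℓ) * varNorm (f 0 - fstar) := by
  have hKpos (i j) : 0 < K i j := hK i j ▸ exp_pos _
  obtain ⟨i₀⟩ := ‹Nonempty (Fin n)›
  obtain ⟨k₀⟩ := ‹Nonempty (Fin m)›
  have hη₁ : 1 ≤ η :=
    hη.2 ⟨i₀, i₀, k₀, k₀, (div_self (mul_pos (hKpos i₀ k₀) (hKpos i₀ k₀)).ne').symm⟩
  have hcross (i i' k l) : K i k * K i' l ≤ η * (K i l * K i' k) := by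
    have := hη.2 ⟨i, i', k, l, rfl⟩
    rw [div_le_iff₀ (mul_pos (hKpos i' k) (hKpos i l))] at this
    linarith [mul_comm (K i l) (K i' k)]
  have hfix := sinkhornStep_eq_self_of_forall_dualObj_le hε.ne' hK hopt
  refine ⟨hlam ▸ (div_lt_one (by positivity)).2 (by linarith), fun ℓ => ?_⟩
  induction ℓ with
  | zero => simp
  | succ ℓ ih =>
    calc varNorm (f (ℓ + 1) - fstar)
        = varNorm (sinkhornStep ε a b C (f ℓ) - sinkhornStep ε a b C fstar) := by
          rw [hiter, hfix]
      _ ≤ lam ^ 2 * varNorm (f ℓ - fstar) :=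
          hlam ▸ varNorm_sinkhornStep_sub_le hε.ne' hη₁ hK hcross _ _
      _ ≤ lam ^ 2 * (lam ^ (2 * ℓ) * varNorm (f 0 - fstar)) := by gcongr
      _ = lam ^ (2 * (ℓ + 1)) * varNorm (f 0 - fstar) := by ring

theorem stmt0 {n m : ℕ} [Nonempty (Fin n)] [Nonempty (Fin m)]
    (ε : ℝ) (hε : 0 < ε)
    (C : Matrix (Fin n) (Fin m) ℝ)
    (a : Fin n → ℝ) (b : Fin m → ℝ)
    (ha : ∀ i, 0 < a i) (hb : ∀ j, 0 < b j)
    (hasum : ∑ i, a i = 1) (hbsum : ∑ j, b j = 1)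
    (K : Matrix (Fin n) (Fin m) ℝ) (hK : ∀ i j, K i j = Real.exp (-C i j / ε))
    (η : ℝ)
    (hη : IsGreatest {r : ℝ | ∃ i j : Fin n, ∃ k l : Fin m,
      r = K i k * K j l / (K j k * K i l)} η)
    (lam : ℝ) (hlam : lam = (Real.sqrt η - 1) / (Real.sqrt η + 1))
    (fstar : Fin n → ℝ) (gstar : Fin m → ℝ)
    (hopt : ∀ (f' : Fin n → ℝ) (g' : Fin m → ℝ),
      dualObj ε a b K f' g' ≤ dualObj ε a b K fstar gstar)
    (f : ℕ → Fin n → ℝ)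
    (hiter : ∀ ℓ : ℕ, f (ℓ + 1) = sinkhornStep ε a b C (f ℓ)) :
    lam < 1 ∧
      ∀ ℓ : ℕ, varNorm (f ℓ - fstar) ≤ lam ^ (2 * ℓ) * varNorm (f 0 - fstar) :=
  stmt0_general ε hε C a b K hK η hη lam hlam fstar gstar hopt f hiter
end

section
/- For univariate measures with a cost c(x,y) whose mixed partial derivative ∂²c/∂x∂y is strictly negative (i.e., −c is supermodular), if x_1 ≤ ... ≤ x_n and y_1 ≤ ... ≤ y_m are sorted supports, then the north-west corner rule applied to the weight vectors a and b produces a coupling P that minimizes ⟨P, C⟩ over all couplings with marginals a and b, where C_{ij} = c(x_i, y_j). -/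
open Finset

/-- Cumulative sum up to and including index `i`. -/
noncomputable def cumSum {n : ℕ} (a : Fin n → ℝ) (i : Fin n) : ℝ :=
  ∑ k ∈ Finset.univ.filter (fun k : Fin n => k ≤ i), a k

/-- Cumulative sum strictly before index `i`. -/
noncomputable def cumSumLt {n : ℕ} (a : Fin n → ℝ) (i : Fin n) : ℝ :=
  ∑ k ∈ Finset.univ.filter (fun k : Fin n => k < i), a k

/-- Closed-form north-west corner solution:
`P_{ij} = max(0, min(A_i, B_j) − max(A_{i−1}, B_{j−1}))` with cumulative sums. -/
noncomputable def nwCorner {n m : ℕ} (a : Fin n → ℝ) (b : Fin m → ℝ) :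
    Matrix (Fin n) (Fin m) ℝ :=
  fun i j => max 0 (min (cumSum a i) (cumSum b j) - max (cumSumLt a i) (cumSumLt b j))

namespace NWAux

lemma clamp1 {L U s t : ℝ} (hLU : L ≤ U) (hst : s ≤ t) :
    max 0 (min U t - max L s) = min U (max L t) - min U (max L s) := by
  simp only [min_def, max_def]; split_ifs <;> linarith

lemma clamp2 {L U : ℝ} (t : ℝ) (hLU : L ≤ U) :
    min U (max L t) = L + (min U t - min L t) := by
  simp only [min_def, max_def]; split_ifs <;> linarith

lemma sum_range_if {M : Type*} [AddCommMonoid M] (g : ℕ → M) (K N : ℕ) :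
    ∑ r ∈ Finset.range N, (if r < K then g r else 0) = ∑ r ∈ Finset.range (min K N), g r := by
  rw [← Finset.sum_filter]; congr 1; ext r
  simp only [Finset.mem_filter, Finset.mem_range]; omega

lemma telescope_if (f : ℕ → ℝ) (K N : ℕ) :
    ∑ r ∈ Finset.range N, (if r < K then f (r+1) - f r else 0) = f (min K N) - f 0 := by
  rw [sum_range_if, Finset.sum_range_sub]

variable {n m : ℕ}

noncomputable def av (a : Fin n → ℝ) (r : ℕ) : ℝ := if h : r < n then a ⟨r, h⟩ else 0

noncomputable def S (a : Fin n → ℝ) (K : ℕ) : ℝ := ∑ r ∈ Finset.range K, av a r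

lemma av_val (a : Fin n → ℝ) (i : Fin n) : av a ↑i = a i := by simp [av]

lemma av_nonneg {a : Fin n → ℝ} (ha : ∀ i, 0 ≤ a i) (r : ℕ) : 0 ≤ av a r := by
  unfold av; split
  · exact ha _
  · exact le_refl 0

lemma S_zero (a : Fin n → ℝ) : S a 0 = 0 := by simp [S]

lemma S_succ (a : Fin n → ℝ) (K : ℕ) : S a (K+1) = S a K + av a K :=
  Finset.sum_range_succ _ _

lemma S_nonneg {a : Fin n → ℝ} (ha : ∀ i, 0 ≤ a i) (K : ℕ) : 0 ≤ S a K :=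
  Finset.sum_nonneg fun r _ => av_nonneg ha r

lemma S_mono {a : Fin n → ℝ} (ha : ∀ i, 0 ≤ a i) : Monotone (S a) := fun K L h =>
  Finset.sum_le_sum_of_subset_of_nonneg (Finset.range_subset_range.2 h)
    (fun r _ _ => av_nonneg ha r)

lemma S_stable (a : Fin n → ℝ) {K : ℕ} (h : n ≤ K) : S a K = S a n := by
  symm
  apply Finset.sum_subset (Finset.range_subset_range.2 h)
  intro r _ hr
  simp only [Finset.mem_range, not_lt] at hr
  simp only [av]
  rw [dif_neg (by omega)]

lemma S_min (a : Fin n → ℝ) (K : ℕ) : S a (min K n) = S a K := by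
  rcases le_total K n with h | h
  · rw [min_eq_left h]
  · rw [min_eq_right h, S_stable a h]

lemma S_top (a : Fin n → ℝ) : S a n = ∑ i, a i := by
  rw [S, ← Fin.sum_univ_eq_sum_range (fun r => av a r) n]
  exact Finset.sum_congr rfl fun i _ => av_val a i

lemma S_le_top {a : Fin n → ℝ} (ha : ∀ i, 0 ≤ a i) (K : ℕ) : S a K ≤ ∑ i, a i := by
  rw [← S_top]
  rcases le_total K n with h | h
  · exact S_mono ha h
  · rw [S_stable a h]

lemma fin_sum_if (g : ℕ → ℝ) (K : ℕ) :
    ∑ k : Fin n, (if (k : ℕ) < K then g (k : ℕ) else 0)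
      = ∑ r ∈ Finset.range (min K n), g r := by
  rw [← sum_range_if g K n]
  exact Fin.sum_univ_eq_sum_range (fun r => if r < K then g r else 0) n

lemma cumSum_eq (a : Fin n → ℝ) (i : Fin n) : cumSum a i = S a ((i : ℕ) + 1) := by
  have h1 : cumSum a i = ∑ k : Fin n, (if (k : ℕ) < (i : ℕ) + 1 then av a (k : ℕ) else 0) := by
    rw [cumSum, Finset.sum_filter]
    refine Finset.sum_congr rfl fun k _ => ?_
    have he : (k ≤ i) = ((k : ℕ) < (i : ℕ) + 1) := by
      simp only [Fin.le_def, eq_iff_iff]; omega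
    rw [av_val]
    exact if_congr (iff_of_eq he) rfl rfl
  rw [h1, fin_sum_if]
  exact S_min a _

lemma cumSumLt_eq (a : Fin n → ℝ) (i : Fin n) : cumSumLt a i = S a (i : ℕ) := by
  have h1 : cumSumLt a i = ∑ k : Fin n, (if (k : ℕ) < (i : ℕ) then av a (k : ℕ) else 0) := by
    rw [cumSumLt, Finset.sum_filter]
    refine Finset.sum_congr rfl fun k _ => ?_
    have he : (k < i) = ((k : ℕ) < (i : ℕ)) := by
      simp only [Fin.lt_def]
    rw [av_val]
    exact if_congr (iff_of_eq he) rfl rfl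
  rw [h1, fin_sum_if]
  exact S_min a _

lemma nwCorner_eq {a : Fin n → ℝ} {b : Fin m → ℝ} (ha : ∀ i, 0 ≤ a i) (hb : ∀ j, 0 ≤ b j)
    (i : Fin n) (j : Fin m) :
    nwCorner a b i j
      = min (S a ((i:ℕ)+1)) (max (S a (i:ℕ)) (S b ((j:ℕ)+1)))
        - min (S a ((i:ℕ)+1)) (max (S a (i:ℕ)) (S b (j:ℕ))) := by
  rw [nwCorner, cumSum_eq, cumSum_eq, cumSumLt_eq, cumSumLt_eq]
  exact clamp1 (by rw [S_succ]; linarith [av_nonneg ha (i:ℕ)])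
    (by rw [S_succ]; linarith [av_nonneg hb (j:ℕ)])

lemma nw_inner {a : Fin n → ℝ} {b : Fin m → ℝ} (ha : ∀ i, 0 ≤ a i) (hb : ∀ j, 0 ≤ b j)
    (i : Fin n) (L : ℕ) :
    ∑ j : Fin m, (if (j:ℕ) < L then nwCorner a b i j else 0)
      = min (S a ((i:ℕ)+1)) (S b L) - min (S a (i:ℕ)) (S b L) := by
  set φ : ℝ → ℝ := fun t => min (S a ((i:ℕ)+1)) (max (S a (i:ℕ)) t) with hφ
  have hLU : S a (i:ℕ) ≤ S a ((i:ℕ)+1) := by rw [S_succ]; linarith [av_nonneg ha (i:ℕ)]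
  have h1 : ∑ j : Fin m, (if (j:ℕ) < L then nwCorner a b i j else 0)
      = ∑ j : Fin m, (if (j:ℕ) < L then (fun r => φ (S b (r+1)) - φ (S b r)) (j:ℕ) else 0) := by
    refine Finset.sum_congr rfl fun j _ => ?_
    refine if_congr Iff.rfl ?_ rfl
    exact nwCorner_eq ha hb i j
  rw [h1, Fin.sum_univ_eq_sum_range
    (fun r => if r < L then (fun r => φ (S b (r+1)) - φ (S b r)) r else 0) m,
    telescope_if (fun r => φ (S b r)) L m]
  have h2 : S b (min L m) = S b L := by
    rcases le_total L m with h | h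
    · rw [min_eq_left h]
    · rw [min_eq_right h, S_stable b h]
  have h3 : φ (S b 0) = S a (i:ℕ) := by
    rw [S_zero, hφ]
    simp only
    rw [max_eq_left (S_nonneg ha _), min_eq_right hLU]
  rw [h2, h3, hφ]
  simp only
  rw [clamp2 (S b L) hLU]
  ring

noncomputable def Fc (P : Matrix (Fin n) (Fin m) ℝ) (K L : ℕ) : ℝ :=
  ∑ i : Fin n, ∑ j : Fin m, if (i:ℕ) < K ∧ (j:ℕ) < L then P i j else 0

lemma nw_F {a : Fin n → ℝ} {b : Fin m → ℝ} (ha : ∀ i, 0 ≤ a i) (hb : ∀ j, 0 ≤ b j)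
    (K L : ℕ) : Fc (nwCorner a b) K L = min (S a K) (S b L) := by
  set ψ : ℝ → ℝ := fun s => min s (S b L) with hψ
  have h1 : Fc (nwCorner a b) K L
      = ∑ i : Fin n, (if (i:ℕ) < K then (fun r => ψ (S a (r+1)) - ψ (S a r)) (i:ℕ) else 0) := by
    rw [Fc]
    refine Finset.sum_congr rfl fun i _ => ?_
    by_cases h : (i:ℕ) < K
    · rw [if_pos h]
      have : ∀ j : Fin m, (if (i:ℕ) < K ∧ (j:ℕ) < L then nwCorner a b i j else 0)
          = (if (j:ℕ) < L then nwCorner a b i j else 0) := by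
        intro j; simp [h]
      rw [Finset.sum_congr rfl fun j _ => this j, nw_inner ha hb i L]
    · rw [if_neg h]
      refine Finset.sum_eq_zero fun j _ => ?_
      simp [h]
  rw [h1, Fin.sum_univ_eq_sum_range
    (fun r => if r < K then (fun r => ψ (S a (r+1)) - ψ (S a r)) r else 0) n,
    telescope_if (fun r => ψ (S a r)) K n]
  have h2 : S a (min K n) = S a K := S_min a K
  rw [h2, hψ]
  simp only [S_zero]
  rw [min_eq_left (S_nonneg hb _)]
  ring

lemma Fc_le_left {a : Fin n → ℝ} {P : Matrix (Fin n) (Fin m) ℝ}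
    (hP : ∀ i j, 0 ≤ P i j) (hPa : ∀ i, ∑ j, P i j = a i) (K L : ℕ) :
    Fc P K L ≤ S a K := by
  have step : Fc P K L ≤ ∑ i : Fin n, (if (i:ℕ) < K then av a (i:ℕ) else 0) := by
    rw [Fc]
    refine Finset.sum_le_sum fun i _ => ?_
    by_cases h : (i:ℕ) < K
    · rw [if_pos h, av_val, ← hPa i]
      refine Finset.sum_le_sum fun j _ => ?_
      by_cases h2 : (j:ℕ) < L
      · simp [h, h2]
      · simp [h2, hP i j]
    · rw [if_neg h]
      refine le_of_eq (Finset.sum_eq_zero fun j _ => ?_)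
      simp [h]
  refine le_trans step (le_of_eq ?_)
  rw [Fin.sum_univ_eq_sum_range (fun r => if r < K then av a r else 0) n, sum_range_if]
  exact S_min a K

lemma Fc_le_right {b : Fin m → ℝ} {P : Matrix (Fin n) (Fin m) ℝ}
    (hP : ∀ i j, 0 ≤ P i j) (hPb : ∀ j, ∑ i, P i j = b j) (K L : ℕ) :
    Fc P K L ≤ S b L := by
  have hcomm : Fc P K L = ∑ j : Fin m, ∑ i : Fin n, (if (i:ℕ) < K ∧ (j:ℕ) < L then P i j else 0) :=
    Finset.sum_comm
  have step : Fc P K L ≤ ∑ j : Fin m, (if (j:ℕ) < L then av b (j:ℕ) else 0) := by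
    rw [hcomm]
    refine Finset.sum_le_sum fun j _ => ?_
    by_cases h : (j:ℕ) < L
    · rw [if_pos h, av_val, ← hPb j]
      refine Finset.sum_le_sum fun i _ => ?_
      by_cases h2 : (i:ℕ) < K
      · simp [h, h2]
      · simp [h2, hP i j]
    · rw [if_neg h]
      refine le_of_eq (Finset.sum_eq_zero fun i _ => ?_)
      simp [h]
  refine le_trans step (le_of_eq ?_)
  rw [Fin.sum_univ_eq_sum_range (fun r => if r < L then av b r else 0) m, sum_range_if]
  exact S_min b L

lemma nw_rowsum {a : Fin n → ℝ} {b : Fin m → ℝ} (ha : ∀ i, 0 ≤ a i) (hb : ∀ j, 0 ≤ b j)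
    (hab : ∑ i, a i ≤ ∑ j, b j) (i : Fin n) :
    ∑ j, nwCorner a b i j = a i := by
  have h1 : ∑ j, nwCorner a b i j = ∑ j : Fin m, (if (j:ℕ) < m then nwCorner a b i j else 0) :=
    Finset.sum_congr rfl fun j _ => by rw [if_pos j.isLt]
  rw [h1, nw_inner ha hb i m]
  have h2 : S a ((i:ℕ)+1) ≤ S b m := by
    rw [S_top]
    exact le_trans (S_le_top ha _) hab
  have h3 : S a (i:ℕ) ≤ S b m := by
    rw [S_top]
    exact le_trans (S_le_top ha _) hab
  rw [min_eq_left h2, min_eq_left h3, S_succ, av_val]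
  ring

lemma nwCorner_symm (a : Fin n → ℝ) (b : Fin m → ℝ) (i : Fin n) (j : Fin m) :
    nwCorner a b i j = nwCorner b a j i := by
  rw [nwCorner, nwCorner, min_comm, max_comm (cumSumLt b j)]

noncomputable def Chat (hn : 0 < n) (hm : 0 < m) (C : Matrix (Fin n) (Fin m) ℝ)
    (p q : ℕ) : ℝ :=
  C ⟨min p (n-1), by omega⟩ ⟨min q (m-1), by omega⟩

lemma Chat_val (hn : 0 < n) (hm : 0 < m) (C : Matrix (Fin n) (Fin m) ℝ)
    (i : Fin n) (j : Fin m) : Chat hn hm C (i:ℕ) (j:ℕ) = C i j := by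
  rw [Chat]
  congr 1 <;> [skip; skip] <;> (apply Fin.ext; simp; omega)

noncomputable def Ediff (hn : 0 < n) (hm : 0 < m) (C : Matrix (Fin n) (Fin m) ℝ)
    (k l : ℕ) : ℝ :=
  Chat hn hm C k l - Chat hn hm C (k+1) l - Chat hn hm C k (l+1) + Chat hn hm C (k+1) (l+1)

lemma point_decomp (hn : 0 < n) (hm : 0 < m) (C : Matrix (Fin n) (Fin m) ℝ)
    (i : Fin n) (j : Fin m) :
    C i j = Chat hn hm C n (j:ℕ) + Chat hn hm C (i:ℕ) m - Chat hn hm C n m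
      + ∑ k ∈ Finset.Ico (i:ℕ) n, ∑ l ∈ Finset.Ico (j:ℕ) m, Ediff hn hm C k l := by
  have hinner : ∀ k : ℕ, ∑ l ∈ Finset.Ico (j:ℕ) m, Ediff hn hm C k l
      = (Chat hn hm C (k+1) m - Chat hn hm C k m) - (Chat hn hm C (k+1) (j:ℕ) - Chat hn hm C k (j:ℕ)) := by
    intro k
    set g : ℕ → ℝ := fun l => Chat hn hm C (k+1) l - Chat hn hm C k l with hg
    have e1 : ∀ l, Ediff hn hm C k l = g (l+1) - g l := by
      intro l; rw [Ediff, hg]; ring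
    rw [Finset.sum_congr rfl fun l _ => e1 l,
      Finset.sum_Ico_eq_sub _ (le_of_lt j.isLt),
      Finset.sum_range_sub g, Finset.sum_range_sub g, hg]
    ring
  rw [Finset.sum_congr rfl fun k _ => hinner k]
  set G : ℕ → ℝ := fun k => (Chat hn hm C k m - Chat hn hm C k (j:ℕ)) with hG
  have e2 : ∀ k, (Chat hn hm C (k+1) m - Chat hn hm C k m)
      - (Chat hn hm C (k+1) (j:ℕ) - Chat hn hm C k (j:ℕ)) = G (k+1) - G k := by
    intro k; rw [hG]; ring
  rw [Finset.sum_congr rfl fun k _ => e2 k,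
    Finset.sum_Ico_eq_sub _ (le_of_lt i.isLt),
    Finset.sum_range_sub G, Finset.sum_range_sub G, hG]
  simp only
  rw [Chat_val hn hm C i j]
  ring

lemma cost_decomp (hn : 0 < n) (hm : 0 < m) (C : Matrix (Fin n) (Fin m) ℝ)
    {a : Fin n → ℝ} {b : Fin m → ℝ} (P : Matrix (Fin n) (Fin m) ℝ)
    (hPa : ∀ i, ∑ j, P i j = a i) (hPb : ∀ j, ∑ i, P i j = b j) :
    ∑ i, ∑ j, P i j * C i j
      = (∑ j, b j * Chat hn hm C n (j:ℕ)) + (∑ i, a i * Chat hn hm C (i:ℕ) m)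
        - (∑ i, a i) * Chat hn hm C n m
        + ∑ k ∈ Finset.range n, ∑ l ∈ Finset.range m, Ediff hn hm C k l * Fc P (k+1) (l+1) := by
  have expand : ∀ i j, P i j * C i j
      = P i j * Chat hn hm C n (j:ℕ) + P i j * Chat hn hm C (i:ℕ) m - P i j * Chat hn hm C n m
        + P i j * ∑ k ∈ Finset.Ico (i:ℕ) n, ∑ l ∈ Finset.Ico (j:ℕ) m, Ediff hn hm C k l := by
    intro i j
    rw [point_decomp hn hm C i j]
    ring
  have hsplit : ∑ i, ∑ j, P i j * C i j
      = (∑ i, ∑ j, P i j * Chat hn hm C n (j:ℕ))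
        + (∑ i, ∑ j, P i j * Chat hn hm C (i:ℕ) m)
        - (∑ i, ∑ j, P i j * Chat hn hm C n m)
        + ∑ i, ∑ j, P i j * ∑ k ∈ Finset.Ico (i:ℕ) n, ∑ l ∈ Finset.Ico (j:ℕ) m, Ediff hn hm C k l := by
    simp only [expand, Finset.sum_add_distrib, Finset.sum_sub_distrib]
  rw [hsplit]
  have hA : (∑ i, ∑ j, P i j * Chat hn hm C n (j:ℕ)) = ∑ j, b j * Chat hn hm C n (j:ℕ) := by
    rw [Finset.sum_comm]
    exact Finset.sum_congr rfl fun j _ => by rw [← Finset.sum_mul, hPb j]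
  have hB : (∑ i, ∑ j, P i j * Chat hn hm C (i:ℕ) m) = ∑ i, a i * Chat hn hm C (i:ℕ) m :=
    Finset.sum_congr rfl fun i _ => by rw [← Finset.sum_mul, hPa i]
  have hD : (∑ i, ∑ j, P i j * Chat hn hm C n m) = (∑ i, a i) * Chat hn hm C n m := by
    rw [Finset.sum_mul]
    exact Finset.sum_congr rfl fun i _ => by rw [← Finset.sum_mul, hPa i]
  have hM : (∑ i, ∑ j, P i j * ∑ k ∈ Finset.Ico (i:ℕ) n, ∑ l ∈ Finset.Ico (j:ℕ) m, Ediff hn hm C k l)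
      = ∑ k ∈ Finset.range n, ∑ l ∈ Finset.range m, Ediff hn hm C k l * Fc P (k+1) (l+1) := by
    have hterm : ∀ (i : Fin n) (j : Fin m),
        P i j * ∑ k ∈ Finset.Ico (i:ℕ) n, ∑ l ∈ Finset.Ico (j:ℕ) m, Ediff hn hm C k l
        = ∑ k ∈ Finset.range n, ∑ l ∈ Finset.range m,
            (if (i:ℕ) < k+1 ∧ (j:ℕ) < l+1 then Ediff hn hm C k l * P i j else 0) := by
      intro i j
      have hIco : ∀ N (i0 : ℕ), Finset.Ico i0 N = (Finset.range N).filter (fun k => i0 ≤ k) := by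
        intro N i0; ext r; simp [Finset.mem_Ico, Finset.mem_range, Finset.mem_filter]; omega
      rw [hIco n (i:ℕ), Finset.sum_filter]
      rw [Finset.mul_sum]
      refine Finset.sum_congr rfl fun k _ => ?_
      by_cases h1 : (i:ℕ) ≤ k
      · rw [if_pos h1, hIco m (j:ℕ), Finset.sum_filter, Finset.mul_sum]
        refine Finset.sum_congr rfl fun l _ => ?_
        by_cases h2 : (j:ℕ) ≤ l
        · rw [if_pos h2, if_pos ⟨by omega, by omega⟩, mul_comm]
        · rw [if_neg h2, if_neg (by omega), mul_zero]
      · rw [if_neg h1, mul_zero]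
        refine (Finset.sum_eq_zero fun l _ => ?_).symm
        rw [if_neg (by omega)]
    rw [Finset.sum_congr rfl fun i _ => Finset.sum_congr rfl fun j _ => hterm i j]
    have swap : (∑ i : Fin n, ∑ j : Fin m, ∑ k ∈ Finset.range n, ∑ l ∈ Finset.range m,
        (if (i:ℕ) < k+1 ∧ (j:ℕ) < l+1 then Ediff hn hm C k l * P i j else 0))
        = ∑ k ∈ Finset.range n, ∑ l ∈ Finset.range m, ∑ i : Fin n, ∑ j : Fin m,
            (if (i:ℕ) < k+1 ∧ (j:ℕ) < l+1 then Ediff hn hm C k l * P i j else 0) := by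
      set t : Fin n → Fin m → ℕ → ℕ → ℝ := fun i j k l =>
        (if (i:ℕ) < k+1 ∧ (j:ℕ) < l+1 then Ediff hn hm C k l * P i j else 0) with ht
      have s1 : ∀ i : Fin n, (∑ j : Fin m, ∑ k ∈ Finset.range n, ∑ l ∈ Finset.range m, t i j k l)
          = ∑ k ∈ Finset.range n, ∑ j : Fin m, ∑ l ∈ Finset.range m, t i j k l :=
        fun i => Finset.sum_comm
      have s2 : (∑ i : Fin n, ∑ k ∈ Finset.range n, ∑ j : Fin m, ∑ l ∈ Finset.range m, t i j k l)
          = ∑ k ∈ Finset.range n, ∑ i : Fin n, ∑ j : Fin m, ∑ l ∈ Finset.range m, t i j k l :=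
        Finset.sum_comm
      have s3 : ∀ (k : ℕ) (i : Fin n), (∑ j : Fin m, ∑ l ∈ Finset.range m, t i j k l)
          = ∑ l ∈ Finset.range m, ∑ j : Fin m, t i j k l :=
        fun k i => Finset.sum_comm
      have s4 : ∀ (k : ℕ), (∑ i : Fin n, ∑ l ∈ Finset.range m, ∑ j : Fin m, t i j k l)
          = ∑ l ∈ Finset.range m, ∑ i : Fin n, ∑ j : Fin m, t i j k l :=
        fun k => Finset.sum_comm
      calc (∑ i : Fin n, ∑ j : Fin m, ∑ k ∈ Finset.range n, ∑ l ∈ Finset.range m, t i j k l)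
          = ∑ i : Fin n, ∑ k ∈ Finset.range n, ∑ j : Fin m, ∑ l ∈ Finset.range m, t i j k l :=
            Finset.sum_congr rfl fun i _ => s1 i
        _ = ∑ k ∈ Finset.range n, ∑ i : Fin n, ∑ j : Fin m, ∑ l ∈ Finset.range m, t i j k l := s2
        _ = ∑ k ∈ Finset.range n, ∑ i : Fin n, ∑ l ∈ Finset.range m, ∑ j : Fin m, t i j k l :=
            Finset.sum_congr rfl fun k _ => Finset.sum_congr rfl fun i _ => s3 k i
        _ = ∑ k ∈ Finset.range n, ∑ l ∈ Finset.range m, ∑ i : Fin n, ∑ j : Fin m, t i j k l :=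
            Finset.sum_congr rfl fun k _ => s4 k
    rw [swap]
    refine Finset.sum_congr rfl fun k _ => Finset.sum_congr rfl fun l _ => ?_
    rw [Fc, Finset.mul_sum]
    refine Finset.sum_congr rfl fun i _ => ?_
    rw [Finset.mul_sum]
    refine Finset.sum_congr rfl fun j _ => ?_
    by_cases h : ((i:ℕ) < k+1 ∧ (j:ℕ) < l+1)
    · rw [if_pos h, if_pos h]
    · rw [if_neg h, if_neg h, mul_zero]
  rw [hA, hB, hD, hM]

lemma Ediff_nonpos (hn : 0 < n) (hm : 0 < m) {c : ℝ → ℝ → ℝ}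
    (hsub : ∀ x x' y y' : ℝ, x < x' → y < y' → c x y + c x' y' < c x y' + c x' y)
    {x : Fin n → ℝ} {y : Fin m → ℝ} (hx : Monotone x) (hy : Monotone y)
    {C : Matrix (Fin n) (Fin m) ℝ} (hC : ∀ i j, C i j = c (x i) (y j))
    (k l : ℕ) : Ediff hn hm C k l ≤ 0 := by
  rw [Ediff, Chat, Chat, Chat, Chat]
  simp only [hC]
  set u := x ⟨min k (n-1), by omega⟩ with hu
  set u' := x ⟨min (k+1) (n-1), by omega⟩ with hu'
  set v := y ⟨min l (m-1), by omega⟩ with hv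
  set v' := y ⟨min (l+1) (m-1), by omega⟩ with hv'
  have huu : u ≤ u' := hx (Fin.mk_le_mk.mpr (by omega))
  have hvv : v ≤ v' := hy (Fin.mk_le_mk.mpr (by omega))
  rcases eq_or_lt_of_le huu with hequ | hltu
  · rw [← hequ]; ring_nf; linarith
  · rcases eq_or_lt_of_le hvv with heqv | hltv
    · rw [← heqv]; ring_nf; linarith
    · have := hsub u u' v v' hltu hltv
      linarith

end NWAux

theorem stmt3 {n m : ℕ} (c : ℝ → ℝ → ℝ)
    (hsub : ∀ x x' y y' : ℝ, x < x' → y < y' → c x y + c x' y' < c x y' + c x' y)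
    (x : Fin n → ℝ) (y : Fin m → ℝ) (hx : Monotone x) (hy : Monotone y)
    (a : Fin n → ℝ) (b : Fin m → ℝ)
    (ha : ∀ i, 0 ≤ a i) (hb : ∀ j, 0 ≤ b j)
    (hasum : ∑ i, a i = 1) (hbsum : ∑ j, b j = 1)
    (C : Matrix (Fin n) (Fin m) ℝ) (hC : ∀ i j, C i j = c (x i) (y j)) :
    (∀ i j, 0 ≤ nwCorner a b i j) ∧
    (∀ i, ∑ j, nwCorner a b i j = a i) ∧
    (∀ j, ∑ i, nwCorner a b i j = b j) ∧
    (∀ P' : Matrix (Fin n) (Fin m) ℝ,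
      (∀ i j, 0 ≤ P' i j) → (∀ i, ∑ j, P' i j = a i) → (∀ j, ∑ i, P' i j = b j) →
      ∑ i, ∑ j, nwCorner a b i j * C i j ≤ ∑ i, ∑ j, P' i j * C i j) := by
  have hn : 0 < n := by
    by_contra h
    push_neg at h
    interval_cases n
    simp at hasum
  have hm : 0 < m := by
    by_contra h
    push_neg at h
    interval_cases m
    simp at hbsum
  have hrow : ∀ i, ∑ j, nwCorner a b i j = a i :=
    NWAux.nw_rowsum ha hb (by rw [hasum, hbsum])
  have hcol : ∀ j, ∑ i, nwCorner a b i j = b j := by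
    intro j
    have h1 : ∑ i, nwCorner a b i j = ∑ i, nwCorner b a j i :=
      Finset.sum_congr rfl fun i _ => NWAux.nwCorner_symm a b i j
    rw [h1]
    exact NWAux.nw_rowsum hb ha (by rw [hasum, hbsum]) j
  refine ⟨fun i j => le_max_left _ _, hrow, hcol, ?_⟩
  intro P' hP' hPa' hPb'
  rw [NWAux.cost_decomp hn hm C (nwCorner a b) hrow hcol,
    NWAux.cost_decomp hn hm C P' hPa' hPb']
  have key : (∑ k ∈ Finset.range n, ∑ l ∈ Finset.range m,
        NWAux.Ediff hn hm C k l * NWAux.Fc (nwCorner a b) (k+1) (l+1))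
      ≤ ∑ k ∈ Finset.range n, ∑ l ∈ Finset.range m,
        NWAux.Ediff hn hm C k l * NWAux.Fc P' (k+1) (l+1) := by
    refine Finset.sum_le_sum fun k _ => Finset.sum_le_sum fun l _ => ?_
    have hE : NWAux.Ediff hn hm C k l ≤ 0 := NWAux.Ediff_nonpos hn hm hsub hx hy hC k l
    have hF : NWAux.Fc P' (k+1) (l+1) ≤ NWAux.Fc (nwCorner a b) (k+1) (l+1) := by
      rw [NWAux.nw_F ha hb]
      exact le_min (NWAux.Fc_le_left hP' hPa' _ _) (NWAux.Fc_le_right hP' hPb' _ _)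
    exact mul_le_mul_of_nonpos_left hF hE
  linarith
end

section
/- Optimal dual potentials of the balanced entropic OT problem are unique up to constant shift: if (f, g) and (f', g') are both maximizers of E(f,g) = ⟨f,a⟩ + ⟨g,b⟩ − ε⟨e^{f/ε}, K e^{g/ε}⟩ with a, b strictly positive probability vectors and K entrywise positive, then there exists s ∈ ℝ with f' = f − s·𝟙 and g' = g + s·𝟙. -/
/-!
The dual objective is concave, and strictly concave in every direction that changes some
sum `f i + g j`: it is affine in `(f, g)` minus `ε ∑ K i j exp ((f i + g j) / ε)` with `K > 0`.
Hence the midpoint of two maximizers is again a maximizer, and strict convexity of `exp`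
forces `f i + g j = f' i + g' j` for all `i, j`, which is exactly a constant shift.
-/

open Finset Real

theorem Real.two_mul_exp_add_div_two_le (x y : ℝ) : 2 * exp ((x + y) / 2) ≤ exp x + exp y := by
  have h := convexOn_exp.2 (Set.mem_univ x) (Set.mem_univ y)
    (by norm_num : (0 : ℝ) ≤ 1 / 2) (by norm_num : (0 : ℝ) ≤ 1 / 2) (by norm_num)
  simp only [smul_eq_mul] at h
  rw [show (x + y) / 2 = 1 / 2 * x + 1 / 2 * y by ring]
  linarith

theorem Real.two_mul_exp_add_div_two_lt {x y : ℝ} (hxy : x ≠ y) :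
    2 * exp ((x + y) / 2) < exp x + exp y := by
  have h := strictConvexOn_exp.2 (Set.mem_univ x) (Set.mem_univ y) hxy
    (by norm_num : (0 : ℝ) < 1 / 2) (by norm_num : (0 : ℝ) < 1 / 2) (by norm_num)
  simp only [smul_eq_mul] at h
  rw [show (x + y) / 2 = 1 / 2 * x + 1 / 2 * y by ring]
  linarith

theorem exists_shift_of_forall_add_eq {ι κ G : Type*} [AddCommGroup G] [Nonempty ι] [Nonempty κ]
    {f f' : ι → G} {g g' : κ → G} (h : ∀ i j, f i + g j = f' i + g' j) :
    ∃ s, (∀ i, f' i = f i - s) ∧ ∀ j, g' j = g j + s := by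
  obtain ⟨i₀⟩ := ‹Nonempty ι›
  obtain ⟨j₀⟩ := ‹Nonempty κ›
  refine ⟨g' j₀ - g j₀, fun i => ?_, fun j => ?_⟩
  · grind [h i j₀]
  · grind [h i₀ j, h i₀ j₀]

theorem dualObj_eq {n m : ℕ} (ε : ℝ) (a : Fin n → ℝ) (b : Fin m → ℝ)
    (K : Matrix (Fin n) (Fin m) ℝ) (f : Fin n → ℝ) (g : Fin m → ℝ) :
    dualObj ε a b K f g = (∑ i, f i * a i) + (∑ j, g j * b j) -
      ε * ∑ i, ∑ j, K i j * exp ((f i + g j) / ε) := by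
  simp only [dualObj, add_div, exp_add, mul_comm, mul_assoc]

theorem two_mul_dualObj_midpoint_sub {n m : ℕ} (ε : ℝ) (a : Fin n → ℝ) (b : Fin m → ℝ)
    (K : Matrix (Fin n) (Fin m) ℝ) (f f' : Fin n → ℝ) (g g' : Fin m → ℝ) :
    2 * dualObj ε a b K (fun i => (f i + f' i) / 2) (fun j => (g j + g' j) / 2)
        - dualObj ε a b K f g - dualObj ε a b K f' g' =
      ε * ∑ i, ∑ j, K i j * (exp ((f i + g j) / ε) + exp ((f' i + g' j) / ε)
        - 2 * exp (((f i + g j) / ε + (f' i + g' j) / ε) / 2)) := by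
  have hf : ∀ i, (f i + f' i) / 2 * a i = (f i * a i + f' i * a i) / 2 := fun i => by ring
  have hg : ∀ j, (g j + g' j) / 2 * b j = (g j * b j + g' j * b j) / 2 := fun j => by ring
  have hexp : ∀ i j, ((f i + f' i) / 2 + (g j + g' j) / 2) / ε =
      ((f i + g j) / ε + (f' i + g' j) / ε) / 2 := fun i j => by ring
  have hsplit : ∀ i j, K i j * (exp ((f i + g j) / ε) + exp ((f' i + g' j) / ε)
        - 2 * exp (((f i + g j) / ε + (f' i + g' j) / ε) / 2)) =
      K i j * exp ((f i + g j) / ε) + K i j * exp ((f' i + g' j) / ε)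
        - 2 * (K i j * exp (((f i + g j) / ε + (f' i + g' j) / ε) / 2)) := fun i j => by ring
  simp only [dualObj_eq, hf, hg, hexp, hsplit, sum_add_distrib, sum_sub_distrib, ← sum_div,
    ← mul_sum]
  ring

theorem add_eq_add_of_forall_dualObj_le {n m : ℕ} {ε : ℝ} (hε : 0 < ε) {a : Fin n → ℝ}
    {b : Fin m → ℝ} {K : Matrix (Fin n) (Fin m) ℝ} (hK : ∀ i j, 0 < K i j)
    {f f' : Fin n → ℝ} {g g' : Fin m → ℝ}
    (hfg : ∀ u v, dualObj ε a b K u v ≤ dualObj ε a b K f g)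
    (hfg' : ∀ u v, dualObj ε a b K u v ≤ dualObj ε a b K f' g') (i : Fin n) (j : Fin m) :
    f i + g j = f' i + g' j := by
  have hmid := two_mul_dualObj_midpoint_sub ε a b K f f' g g'
  set gap : Fin n → Fin m → ℝ := fun i j => exp ((f i + g j) / ε) + exp ((f' i + g' j) / ε)
    - 2 * exp (((f i + g j) / ε + (f' i + g' j) / ε) / 2)
  have hsum : ε * ∑ i, ∑ j, K i j * gap i j ≤ 0 := by
    linarith [hfg (fun i => (f i + f' i) / 2) (fun j => (g j + g' j) / 2),
      hfg' (fun i => (f i + f' i) / 2) (fun j => (g j + g' j) / 2)]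
  have hgap_nonneg : ∀ i j, 0 ≤ K i j * gap i j := fun i j =>
    mul_nonneg (hK i j).le (sub_nonneg.2 (two_mul_exp_add_div_two_le _ _))
  by_contra hne
  have hgap_pos : 0 < K i j * gap i j :=
    mul_pos (hK i j) (sub_pos.2 (two_mul_exp_add_div_two_lt (by
      rwa [Ne, div_left_inj' hε.ne'])))
  have : 0 < ∑ i, ∑ j, K i j * gap i j :=
    sum_pos' (fun i _ => sum_nonneg fun j _ => hgap_nonneg i j)
      ⟨i, mem_univ i, sum_pos' (fun j _ => hgap_nonneg i j) ⟨j, mem_univ j, hgap_pos⟩⟩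
  exact (mul_pos hε this).not_ge hsum

theorem stmt5_general {n m : ℕ} (ε : ℝ) (hε : 0 < ε)
    (a : Fin n → ℝ) (b : Fin m → ℝ)
    (hasum : ∑ i, a i = 1) (hbsum : ∑ j, b j = 1)
    (K : Matrix (Fin n) (Fin m) ℝ) (hK : ∀ i j, 0 < K i j)
    (f f' : Fin n → ℝ) (g g' : Fin m → ℝ)
    (hfg : ∀ (u : Fin n → ℝ) (v : Fin m → ℝ), dualObj ε a b K u v ≤ dualObj ε a b K f g)
    (hfg' : ∀ (u : Fin n → ℝ) (v : Fin m → ℝ), dualObj ε a b K u v ≤ dualObj ε a b K f' g') :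
    ∃ s : ℝ, (∀ i, f' i = f i - s) ∧ (∀ j, g' j = g j + s) := by
  have : Nonempty (Fin n) := univ_nonempty_iff.1 (nonempty_of_sum_ne_zero (hasum ▸ one_ne_zero))
  have : Nonempty (Fin m) := univ_nonempty_iff.1 (nonempty_of_sum_ne_zero (hbsum ▸ one_ne_zero))
  exact exists_shift_of_forall_add_eq (add_eq_add_of_forall_dualObj_le hε hK hfg hfg')

theorem stmt5 {n m : ℕ} (ε : ℝ) (hε : 0 < ε)
    (a : Fin n → ℝ) (b : Fin m → ℝ)
    (ha : ∀ i, 0 < a i) (hb : ∀ j, 0 < b j)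
    (hasum : ∑ i, a i = 1) (hbsum : ∑ j, b j = 1)
    (K : Matrix (Fin n) (Fin m) ℝ) (hK : ∀ i j, 0 < K i j)
    (f f' : Fin n → ℝ) (g g' : Fin m → ℝ)
    (hfg : ∀ (u : Fin n → ℝ) (v : Fin m → ℝ), dualObj ε a b K u v ≤ dualObj ε a b K f g)
    (hfg' : ∀ (u : Fin n → ℝ) (v : Fin m → ℝ), dualObj ε a b K u v ≤ dualObj ε a b K f' g') :
    ∃ s : ℝ, (∀ i, f' i = f i - s) ∧ (∀ j, g' j = g j + s) :=
  stmt5_general ε hε a b hasum hbsum K hK f f' g g' hfg hfg'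
end

section
/- At fixed points of the Sinkhorn iteration, the coupling P_{ij} = e^{(f_i+g_j−C_{ij})/ε} satisfies both marginal constraints P𝟙 = a and Pᵀ𝟙 = b, and (f,g) is a global maximizer of the concave dual objective E. -/
open Finset Real

/-!
At a fixed point the `f`-update says `exp (f i / ε) = a i / ∑ j, exp ((g j - C i j) / ε)`, which is
exactly the row-marginal condition `P 𝟙 = a`; symmetrically the `g`-update gives `Pᵀ 𝟙 = b`.
For optimality, the tangent-line inequality of the convex function `t ↦ ε exp (t / ε)` bounds
`E (f', g') - E (f, g)` by the pairing of `(f' - f, g' - g)` with the marginal residuals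
`(a - P 𝟙, b - Pᵀ 𝟙)`, which vanish.
-/

/-- Entropic dual objective E(f,g) = ⟨f,a⟩ + ⟨g,b⟩ − ε Σ_{ij} e^{(f_i+g_j−C_{ij})/ε}. -/
noncomputable def dualObjC {n m : ℕ} (ε : ℝ) (a : Fin n → ℝ) (b : Fin m → ℝ)
    (C : Matrix (Fin n) (Fin m) ℝ) (f : Fin n → ℝ) (g : Fin m → ℝ) : ℝ :=
  (∑ i, f i * a i) + (∑ j, g j * b j) -
    ε * ∑ i, ∑ j, Real.exp ((f i + g j - C i j) / ε)

theorem sum_exp_add_div_eq_of_eq_log_sub_log {ι : Type*} [Fintype ι] [Nonempty ι]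
    {ε α x : ℝ} (hε : ε ≠ 0) (hα : 0 < α) (y : ι → ℝ)
    (hx : x = ε * log α - ε * log (∑ j, exp (y j / ε))) :
    ∑ j, exp ((x + y j) / ε) = α := by
  set S := ∑ j, exp (y j / ε)
  have hS : 0 < S := sum_pos (fun j _ => exp_pos _) univ_nonempty
  have hx' : exp (x / ε) = α / S := by
    rw [hx, ← mul_sub, mul_div_cancel_left₀ _ hε, exp_sub, exp_log hα, exp_log hS]
  simp only [add_div, exp_add, ← mul_sum, hx']
  exact div_mul_cancel₀ α hS.ne'

theorem exp_div_mul_sub_le {ε : ℝ} (hε : 0 < ε) (u v : ℝ) :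
    exp (u / ε) * (v - u) ≤ ε * exp (v / ε) - ε * exp (u / ε) := by
  have hsplit : exp (v / ε) = exp (u / ε) * exp ((v - u) / ε) := by
    rw [← exp_add, sub_div, add_sub_cancel]
  rw [hsplit]
  calc exp (u / ε) * (v - u) = ε * (exp (u / ε) * ((v - u) / ε + 1)) - ε * exp (u / ε) := by
        field_simp; ring
    _ ≤ _ := by gcongr; exact add_one_le_exp _

theorem dualObjC_le_of_marginals {n m : ℕ} {ε : ℝ} (hε : 0 < ε)
    {a : Fin n → ℝ} {b : Fin m → ℝ} {C : Matrix (Fin n) (Fin m) ℝ}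
    {f : Fin n → ℝ} {g : Fin m → ℝ}
    (hrow : ∀ i, ∑ j, exp ((f i + g j - C i j) / ε) = a i)
    (hcol : ∀ j, ∑ i, exp ((f i + g j - C i j) / ε) = b j)
    (f' : Fin n → ℝ) (g' : Fin m → ℝ) :
    dualObjC ε a b C f' g' ≤ dualObjC ε a b C f g := by
  set P : Fin n → Fin m → ℝ := fun i j => exp ((f i + g j - C i j) / ε)
  have hpair : ∑ i, ∑ j, P i j * ((f' i + g' j - C i j) - (f i + g j - C i j))
      = ∑ i, (f' i - f i) * a i + ∑ j, (g' j - g j) * b j := by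
    have hsplit : ∀ i j, (f' i + g' j - C i j) - (f i + g j - C i j)
        = (f' i - f i) + (g' j - g j) := fun i j => by ring
    simp only [hsplit, mul_add, sum_add_distrib]
    congr 1
    · exact sum_congr rfl fun i _ => by rw [← sum_mul, hrow, mul_comm]
    · rw [sum_comm]
      exact sum_congr rfl fun j _ => by rw [← sum_mul, hcol, mul_comm]
  have htangent : ∑ i, ∑ j, P i j * ((f' i + g' j - C i j) - (f i + g j - C i j))
      ≤ ε * ∑ i, ∑ j, exp ((f' i + g' j - C i j) / ε) - ε * ∑ i, ∑ j, P i j := by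
    simp only [mul_sum, ← sum_sub_distrib]
    gcongr with i _ j _
    exact exp_div_mul_sub_le hε _ _
  rw [hpair] at htangent
  simp only [sub_mul, sum_sub_distrib] at htangent
  unfold dualObjC
  linarith

theorem stmt17 {n m : ℕ} (ε : ℝ) (hε : 0 < ε)
    (a : Fin n → ℝ) (b : Fin m → ℝ)
    (ha : ∀ i, 0 < a i) (hb : ∀ j, 0 < b j)
    (hasum : ∑ i, a i = 1) (hbsum : ∑ j, b j = 1)
    (C : Matrix (Fin n) (Fin m) ℝ)
    (f : Fin n → ℝ) (g : Fin m → ℝ)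
    (hfixf : ∀ i, f i = ε * Real.log (a i) -
      ε * Real.log (∑ j, Real.exp ((g j - C i j) / ε)))
    (hfixg : ∀ j, g j = ε * Real.log (b j) -
      ε * Real.log (∑ i, Real.exp ((f i - C i j) / ε))) :
    (∀ i, ∑ j, Real.exp ((f i + g j - C i j) / ε) = a i) ∧
    (∀ j, ∑ i, Real.exp ((f i + g j - C i j) / ε) = b j) ∧
    (∀ (f' : Fin n → ℝ) (g' : Fin m → ℝ),
      dualObjC ε a b C f' g' ≤ dualObjC ε a b C f g) := by
  have : Nonempty (Fin n) :=
    univ_nonempty_iff.mp (nonempty_of_sum_ne_zero (hasum ▸ one_ne_zero))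
  have : Nonempty (Fin m) :=
    univ_nonempty_iff.mp (nonempty_of_sum_ne_zero (hbsum ▸ one_ne_zero))
  have hrow : ∀ i, ∑ j, exp ((f i + g j - C i j) / ε) = a i := fun i => by
    simpa only [add_sub_assoc] using
      sum_exp_add_div_eq_of_eq_log_sub_log hε.ne' (ha i) _ (hfixf i)
  have hcol : ∀ j, ∑ i, exp ((f i + g j - C i j) / ε) = b j := fun j => by
    convert sum_exp_add_div_eq_of_eq_log_sub_log hε.ne' (hb j) _ (hfixg j) using 4
    ring
  exact ⟨hrow, hcol, dualObjC_le_of_marginals hε hrow hcol⟩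
end
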